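/- arXiv:2311.04628 — 4 statements merged into one kernel-verified Lean document; each statement's English description precedes it below -/
import Mathlib

section
/- For all ε ∈ (0, 1/2), t > 0, s' ≥ 0: ∫₀^t (1/√(s+2ε²))·(1/(s'+s+2ε²)) ds ≤ π/√(s'+2ε²). -/
/-!
Since `√(s + 2ε²) ≥ √s`, the integrand is at most `1 / (√s (s + c))` with `c = s' + 2ε²`, and
`(2 / √c) · arctan (√s / √c)` is an antiderivative of the latter; it vanishes at `0` and stays
below `π / √c` because `arctan < π / 2`.
-/

open Set Real MeasureTheory

lemma hasDerivAt_arctan_sqrt_div_sqrt {c x : ℝ} (hc : 0 < c) (hx : 0 < x) :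
    HasDerivAt (fun s => 2 / √c * arctan (√s / √c)) (1 / (√x * (x + c))) x := by
  refine (((hasDerivAt_sqrt hx.ne').div_const √c).arctan.const_mul (2 / √c)).congr_deriv ?_
  have hsx : 0 < √x := sqrt_pos.mpr hx
  have hsc : 0 < √c := sqrt_pos.mpr hc
  field_simp
  rw [sq_sqrt hx.le, sq_sqrt hc.le]
  ring

lemma integral_le_pi_div_sqrt_of_le {f : ℝ → ℝ} {c t : ℝ} (hc : 0 < c) (ht : 0 ≤ t)
    (hf : IntegrableOn f (Icc 0 t)) (hle : ∀ x ∈ Ioo 0 t, f x ≤ 1 / (√x * (x + c))) :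
    ∫ x in 0..t, f x ≤ π / √c := by
  have hsc : 0 < √c := sqrt_pos.mpr hc
  calc ∫ x in 0..t, f x ≤ 2 / √c * arctan (√t / √c) - 2 / √c * arctan (√0 / √c) :=
        intervalIntegral.integral_le_sub_of_hasDeriv_right_of_le ht (by fun_prop)
          (fun x hx => (hasDerivAt_arctan_sqrt_div_sqrt hc hx.1).hasDerivWithinAt) hf hle
    _ ≤ 2 / √c * (π / 2) := by
        rw [sqrt_zero, zero_div, arctan_zero, mul_zero, sub_zero]
        gcongr
        exact (arctan_lt_pi_div_two _).le
    _ = π / √c := by ring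

/-- For `ε ∈ (0,1/2)`, `t > 0`, `s' ≥ 0`:
`∫₀^t (s+2ε²)^{-1/2}·(s'+s+2ε²)^{-1} ds ≤ π/√(s'+2ε²)`. -/
theorem kernel_time_integral_bound (ε t s' : ℝ)
    (hε : ε ∈ Ioo (0:ℝ) (1/2)) (ht : 0 < t) (hs' : 0 ≤ s') :
    (∫ s in (0:ℝ)..t, (1 / Real.sqrt (s + 2*ε^2)) * (1 / (s' + s + 2*ε^2))) ≤
      Real.pi / Real.sqrt (s' + 2*ε^2) := by
  have ha : 0 < 2 * ε ^ 2 := by have := hε.1; positivity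
  have hcont : ContinuousOn (fun s => 1 / √(s + 2 * ε ^ 2) * (1 / (s' + s + 2 * ε ^ 2)))
      (Icc 0 t) := by
    refine ContinuousOn.mul (continuousOn_const.div (by fun_prop) fun s hs => ?_)
      (continuousOn_const.div (by fun_prop) fun s hs => ?_)
    · exact (sqrt_pos.mpr (by linarith [hs.1])).ne'
    · linarith [hs.1]
  refine integral_le_pi_div_sqrt_of_le (by positivity) ht.le
    (hcont.integrableOn_compact isCompact_Icc) fun s hs => ?_
  rw [one_div_mul_one_div, show s' + s + 2 * ε ^ 2 = s + (s' + 2 * ε ^ 2) by ring]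
  have hs0 : 0 < √s := sqrt_pos.mpr hs.1
  have hsa : s ≤ s + 2 * ε ^ 2 := by linarith
  have hsc : 0 < s + (s' + 2 * ε ^ 2) := by linarith [hs.1]
  gcongr
end

section
/- Let m ∈ R, m̄ = max(m,0), ε ∈ (0,1/2), t > 0, λ_ε > 0, and for integer k ≥ 1 define I_k := ∫_{[0,t]^k} ∏_{j=1}^k [λ_ε² e^{m(s_j+s_{j+1})} / (2π(s_j+s_{j+1}+2ε²))] ds₁…ds_k, with the cyclic convention s_{k+1} = s₁. Then I_k ≤ (λ_ε e^{m̄ t})^{2k} / (2^k π) · log(1 + t/ε²). -/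
/-!
Bounding `e^{m(s+s')}` by `e^{2 m̄ t}` reduces the integrand to `(λ² e^{2 m̄ t} / 2π)^k` times
the cyclic product of the kernel `K(u, v) = (u + v + c)⁻¹`, `c = 2ε²`. By AM–GM,
`K(u, v) ≤ g(u) g(v)` with `g(u) = (u + c)^{-1/2}`; closing the cycle this way leaves the path
`g(s₁) K(s₁, s₂) ⋯ K(s_{k-1}, s_k) g(s_k)`. The Schur-type bound `∫₀^t K(u, y) g(y) dy ≤ π g(u)`
(from `∫₀^∞ y^{-1/2} (y + b)⁻¹ dy = π b^{-1/2}`) integrates out one variable at a time, leaving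
`π^{k-1} ∫₀^t g² = π^{k-1} log(1 + t/c)`.
-/

open MeasureTheory Real Set
open scoped ENNReal

section KernelChain

variable {α : Type*} [MeasurableSpace α] {μ : Measure α} [SigmaFinite μ]
  {g : α → ℝ≥0∞} {K : α → α → ℝ≥0∞} {C : ℝ≥0∞}

theorem ae_forall_mem_pi {ι : Type*} [Fintype ι] {s : Set α} (hs : ∀ᵐ a ∂μ, a ∈ s) :
    ∀ᵐ x ∂Measure.pi (fun _ : ι => μ), ∀ i, x i ∈ s :=
  ae_all_iff.2 fun i => (Measure.tendsto_eval_ae_ae (i := i)).eventually hs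

theorem lintegral_pi_fin_succ_eq_lintegral_snoc (μ : Measure α) [SigmaFinite μ] {n : ℕ}
    {f : (Fin (n + 1) → α) → ℝ≥0∞} (hf : Measurable f) :
    ∫⁻ x, f x ∂Measure.pi (fun _ => μ) =
      ∫⁻ x, ∫⁻ y, f (Fin.snoc x y) ∂μ ∂Measure.pi (fun _ => μ) := by
  have he := (measurePreserving_piFinSuccAbove (fun _ => μ) (Fin.last n)).symm
  have hprod := lintegral_prod_symm (μ := μ) (ν := Measure.pi fun _ : Fin n => μ) _
    (hf.comp he.measurable).aemeasurable
  rw [← he.lintegral_comp hf, ← Function.comp_def, hprod]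
  simp [Fin.snocEquiv]

theorem lintegral_chain_le (hg : Measurable g) (hK : Measurable (Function.uncurry K))
    (hKg : ∀ᵐ a ∂μ, ∫⁻ y, K a y * g y ∂μ ≤ C * g a) (n : ℕ) :
    ∫⁻ x, g (x 0) * ((∏ j : Fin n, K (x j.castSucc) (x j.succ)) * g (x (Fin.last n)))
      ∂Measure.pi (fun _ => μ) ≤ C ^ n * ∫⁻ y, g y * g y ∂μ := by
  induction n with
  | zero =>
    simpa using ((measurePreserving_piUnique (fun _ : Fin 1 => μ)).lintegral_comp
      (f := fun y => g y * g y) (by fun_prop)).le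
  | succ n ih =>
    rw [lintegral_pi_fin_succ_eq_lintegral_snoc μ (by fun_prop)]
    calc ∫⁻ x, ∫⁻ y, _ ∂μ ∂Measure.pi (fun _ => μ)
        = ∫⁻ x, g (x 0) * (∏ j : Fin n, K (x j.castSucc) (x j.succ)) *
            ∫⁻ y, K (x (Fin.last n)) y * g y ∂μ ∂Measure.pi (fun _ => μ) := by
          refine lintegral_congr fun x => ?_
          rw [← lintegral_const_mul _ (by fun_prop)]
          refine lintegral_congr fun y => ?_
          simp only [Fin.prod_univ_castSucc, Fin.succ_last, Fin.succ_castSucc, Fin.snoc_apply_zero,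
            Fin.snoc_castSucc, Fin.snoc_last]
          ring
      _ ≤ ∫⁻ x, C * (g (x 0) * ((∏ j : Fin n, K (x j.castSucc) (x j.succ)) *
            g (x (Fin.last n)))) ∂Measure.pi (fun _ => μ) := by
          refine lintegral_mono_ae ?_
          filter_upwards [Measure.tendsto_eval_ae_ae.eventually hKg] with x hx
          calc _ ≤ g (x 0) * (∏ j : Fin n, K (x j.castSucc) (x j.succ)) *
                  (C * g (x (Fin.last n))) := by
                gcongr
            _ = _ := by ring
      _ ≤ C ^ (n + 1) * ∫⁻ y, g y * g y ∂μ := by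
          rw [lintegral_const_mul _ (by fun_prop), pow_succ', mul_assoc]
          gcongr

theorem lintegral_prod_cycle_le {s : Set α} (hs : ∀ᵐ a ∂μ, a ∈ s) (hg : Measurable g)
    (hK : Measurable (Function.uncurry K)) (hKg : ∀ᵐ a ∂μ, ∫⁻ y, K a y * g y ∂μ ≤ C * g a)
    (hK_le : ∀ a ∈ s, ∀ b ∈ s, K a b ≤ g a * g b) (n : ℕ) :
    ∫⁻ x, ∏ j : Fin (n + 1), K (x j) (x (j + 1)) ∂Measure.pi (fun _ => μ) ≤
      C ^ n * ∫⁻ y, g y * g y ∂μ := by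
  refine le_trans (lintegral_mono_ae ?_) (lintegral_chain_le hg hK hKg n)
  filter_upwards [ae_forall_mem_pi hs] with x hx
  rw [Fin.prod_univ_castSucc, Fin.last_add_one]
  simp only [Fin.coeSucc_eq_succ]
  calc _ ≤ (∏ j : Fin n, K (x j.castSucc) (x j.succ)) * (g (x (Fin.last n)) * g (x 0)) := by
        gcongr
        exact hK_le _ (hx _) _ (hx _)
    _ = _ := by ring

end KernelChain

open Filter Topology in
theorem lintegral_Ioi_inv_sqrt_mul_inv_add {b : ℝ} (hb : 0 < b) :
    ∫⁻ y in Ioi 0, ENNReal.ofReal ((√y)⁻¹ * (y + b)⁻¹) = ENNReal.ofReal (π / √b) := by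
  have hsb : 0 < √b := sqrt_pos.2 hb
  set F : ℝ → ℝ := fun y => 2 / √b * arctan (√y / √b)
  have hderiv : ∀ y ∈ Ioi (0 : ℝ), HasDerivAt F ((√y)⁻¹ * (y + b)⁻¹) y := by
    intro y (hy : 0 < y)
    refine ((((hasDerivAt_sqrt hy.ne').div_const √b).arctan).const_mul (2 / √b)).congr_deriv ?_
    rw [div_pow, sq_sqrt hy.le, sq_sqrt hb.le]
    field_simp
    rw [sq_sqrt hb.le]
    ring
  have hnonneg : ∀ y ∈ Ioi (0 : ℝ), 0 ≤ (√y)⁻¹ * (y + b)⁻¹ := fun y (hy : 0 < y) => by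
    have := hy.le; positivity
  have hcont : ContinuousWithinAt F (Ici 0) 0 := by fun_prop
  have hlim : Tendsto F atTop (𝓝 (π / √b)) := by
    rw [show π / √b = 2 / √b * (π / 2) by ring]
    exact ((tendsto_arctan_atTop.mono_right nhdsWithin_le_nhds).comp
      (tendsto_sqrt_atTop.atTop_div_const hsb)).const_mul (2 / √b)
  rw [← ofReal_integral_eq_lintegral_ofReal
      (integrableOn_Ioi_deriv_of_nonneg hcont hderiv hnonneg hlim)
      (ae_restrict_of_forall_mem measurableSet_Ioi hnonneg),
    integral_Ioi_of_hasDerivAt_of_nonneg hcont hderiv hnonneg hlim]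
  simp [F]

theorem inv_add_add_le_inv_sqrt_mul_inv_sqrt {c u v : ℝ} (hc : 0 < c) (hu : 0 ≤ u)
    (hv : 0 ≤ v) : (u + v + c)⁻¹ ≤ (√(u + c))⁻¹ * (√(v + c))⁻¹ := by
  rw [← mul_inv, ← sqrt_mul (by linarith)]
  refine inv_anti₀ (sqrt_pos.2 (by positivity)) (sqrt_le_iff.2 ⟨by linarith, by nlinarith⟩)

theorem lintegral_Icc_inv_add_mul_inv_sqrt_le {c u : ℝ} (t : ℝ) (hc : 0 < c) (hu : 0 ≤ u) :
    ∫⁻ y in Icc 0 t, ENNReal.ofReal (u + y + c)⁻¹ * ENNReal.ofReal (√(y + c))⁻¹ ≤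
      ENNReal.ofReal π * ENNReal.ofReal (√(u + c))⁻¹ := by
  rw [← setLIntegral_congr Ioc_ae_eq_Icc, ← ENNReal.ofReal_mul pi_pos.le, ← div_eq_mul_inv,
    ← lintegral_Ioi_inv_sqrt_mul_inv_add (by linarith : 0 < u + c)]
  refine (setLIntegral_mono (by fun_prop) fun y (hy : y ∈ Ioc 0 t) => ?_).trans
    (lintegral_mono_set Ioc_subset_Ioi_self)
  rw [← ENNReal.ofReal_mul (inv_nonneg.2 (by linarith [hy.1]))]
  refine ENNReal.ofReal_le_ofReal ?_
  rw [mul_comm, show u + y + c = y + (u + c) by ring]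
  exact mul_le_mul_of_nonneg_right (inv_anti₀ (sqrt_pos.2 hy.1) (sqrt_le_sqrt (by linarith)))
    (inv_nonneg.2 (by linarith [hy.1]))

theorem lintegral_Icc_inv_add {c t : ℝ} (hc : 0 < c) (ht : 0 ≤ t) :
    ∫⁻ y in Icc 0 t, ENNReal.ofReal (y + c)⁻¹ = ENNReal.ofReal (log (1 + t / c)) := by
  have hpos : ∀ y ∈ Icc 0 t, 0 < y + c := fun y hy => by linarith [hy.1]
  have hint : IntegrableOn (fun y => (y + c)⁻¹) (Icc 0 t) :=
    ((continuous_add_const c).continuousOn.inv₀ fun y hy => (hpos y hy).ne').integrableOn_Icc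
  rw [← ofReal_integral_eq_lintegral_ofReal hint
      (ae_restrict_of_forall_mem measurableSet_Icc fun y hy => inv_nonneg.2 (hpos y hy).le),
    integral_Icc_eq_integral_Ioc, ← intervalIntegral.integral_of_le ht,
    intervalIntegral.integral_comp_add_right (fun y => y⁻¹), zero_add,
    integral_inv_of_pos hc (by linarith)]
  congr 2
  field_simp
  ring

theorem lintegral_prod_cycle_inv_add_le {c t : ℝ} (hc : 0 < c) (ht : 0 ≤ t) (n : ℕ) :
    ∫⁻ x, ∏ j : Fin (n + 1), ENNReal.ofReal (x j + x (j + 1) + c)⁻¹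
        ∂Measure.pi (fun _ => volume.restrict (Icc (0 : ℝ) t)) ≤
      ENNReal.ofReal π ^ n * ENNReal.ofReal (log (1 + t / c)) := by
  have hsq : ∫⁻ y in Icc 0 t, ENNReal.ofReal (√(y + c))⁻¹ * ENNReal.ofReal (√(y + c))⁻¹ =
      ENNReal.ofReal (log (1 + t / c)) := by
    rw [← lintegral_Icc_inv_add hc ht]
    refine setLIntegral_congr_fun measurableSet_Icc fun y (hy : y ∈ Icc 0 t) => ?_
    rw [← ENNReal.ofReal_mul (by positivity), ← mul_inv, mul_self_sqrt (by linarith [hy.1])]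
  rw [← hsq]
  refine lintegral_prod_cycle_le (ae_restrict_mem measurableSet_Icc) (by fun_prop) (by fun_prop)
    (ae_restrict_of_forall_mem measurableSet_Icc fun u hu =>
      lintegral_Icc_inv_add_mul_inv_sqrt_le t hc hu.1) (fun u hu v hv => ?_) n
  rw [← ENNReal.ofReal_mul (by positivity)]
  exact ENNReal.ofReal_le_ofReal (inv_add_add_le_inv_sqrt_mul_inv_sqrt hc hu.1 hv.1)

theorem integral_le_of_lintegral_ofReal_le {α : Type*} [MeasurableSpace α] {μ : Measure α}
    {f : α → ℝ} {b : ℝ} (hb : 0 ≤ b) (h : ∫⁻ a, ENNReal.ofReal (f a) ∂μ ≤ ENNReal.ofReal b) :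
    ∫ a, f a ∂μ ≤ b := by
  by_cases hf : Integrable f μ
  · rw [integral_eq_lintegral_pos_part_sub_lintegral_neg_part hf]
    linarith [ENNReal.toReal_le_of_le_ofReal hb h, ENNReal.toReal_nonneg
      (a := ∫⁻ a, ENNReal.ofReal (-f a) ∂μ)]
  · rwa [integral_undef hf]

theorem exp_mul_add_le_exp_max_mul_sq {m t u v : ℝ} (hu : u ∈ Icc 0 t) (hv : v ∈ Icc 0 t) :
    exp (m * (u + v)) ≤ exp (max m 0 * t) ^ 2 := by
  rw [← exp_nat_mul, exp_le_exp]
  have h₁ : m * (u + v) ≤ max m 0 * (u + v) :=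
    mul_le_mul_of_nonneg_right (le_max_left m 0) (by linarith [hu.1, hv.1])
  have h₂ : max m 0 * (u + v) ≤ max m 0 * (2 * t) :=
    mul_le_mul_of_nonneg_left (by linarith [hu.2, hv.2]) (le_max_right m 0)
  push_cast
  linarith

theorem mul_exp_div_le_mul_inv {lam m t c u v : ℝ} (hc : 0 < c) (hu : u ∈ Icc 0 t)
    (hv : v ∈ Icc 0 t) :
    lam ^ 2 * exp (m * (u + v)) / (2 * π * (u + v + c)) ≤
      lam ^ 2 * exp (max m 0 * t) ^ 2 / (2 * π) * (u + v + c)⁻¹ := by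
  have : 0 < 2 * π * (u + v + c) := by have := hu.1; have := hv.1; positivity
  rw [← div_eq_mul_inv, div_div]
  gcongr
  exact exp_mul_add_le_exp_max_mul_sq hu hv

theorem ofReal_prod_mul_exp_div_le {lam m t c : ℝ} (hc : 0 < c) {n : ℕ} {s : Fin (n + 1) → ℝ}
    (hs : ∀ j, s j ∈ Icc 0 t) :
    ENNReal.ofReal (∏ j, lam ^ 2 * exp (m * (s j + s (j + 1))) / (2 * π * (s j + s (j + 1) + c))) ≤
      ENNReal.ofReal (lam ^ 2 * exp (max m 0 * t) ^ 2 / (2 * π)) ^ (n + 1) *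
        ∏ j, ENNReal.ofReal (s j + s (j + 1) + c)⁻¹ := by
  have hk : ∀ j, 0 < s j + s (j + 1) + c := fun j => by linarith [(hs j).1, (hs (j + 1)).1]
  rw [← ENNReal.ofReal_pow (by positivity),
    ← ENNReal.ofReal_prod_of_nonneg fun j _ => (inv_pos.2 (hk j)).le,
    ← ENNReal.ofReal_mul (by positivity)]
  refine ENNReal.ofReal_le_ofReal ((Finset.prod_le_prod (fun j _ => ?_)
    fun j _ => mul_exp_div_le_mul_inv hc (hs j) (hs (j + 1))).trans_eq ?_)
  · have := hk j
    positivity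
  · rw [← Finset.pow_card_mul_prod, Finset.card_univ, Fintype.card_fin]

theorem vcycle_integral_bound_general (m ε t lam : ℝ)
    (hε : ε ∈ Ioo (0:ℝ) (1/2)) (ht : 0 < t) (n : ℕ) :
    (∫ s in (Set.univ.pi fun _ : Fin (n+1) => Icc (0:ℝ) t),
        ∏ j : Fin (n+1),
          lam^2 * Real.exp (m * (s j + s (j+1))) /
            (2 * Real.pi * (s j + s (j+1) + 2*ε^2))) ≤
      (lam * Real.exp (max m 0 * t)) ^ (2*(n+1)) / (2^(n+1) * Real.pi) *
        Real.log (1 + t/ε^2) := by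
  have hε₀ : 0 < ε := hε.1
  set c := 2 * ε ^ 2
  have hc : 0 < c := by positivity
  set D := lam ^ 2 * exp (max m 0 * t) ^ 2 / (2 * π)
  have hcoef : (lam * exp (max m 0 * t)) ^ (2 * (n + 1)) / (2 ^ (n + 1) * π) =
      D ^ (n + 1) * π ^ n := by
    rw [div_eq_iff (by positivity), pow_mul, mul_pow lam, div_pow, mul_pow 2 π, pow_succ π]
    field_simp
  have hlog : log (1 + t / c) ≤ log (1 + t / ε ^ 2) := by
    gcongr
    linarith
  have hlog₀ : 0 ≤ log (1 + t / ε ^ 2) := log_nonneg (by linarith [div_nonneg ht.le (sq_nonneg ε)])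
  rw [hcoef, volume_pi, Measure.restrict_pi_pi]
  refine integral_le_of_lintegral_ofReal_le (mul_nonneg (by positivity) hlog₀) ?_
  calc _ ≤ ∫⁻ s, ENNReal.ofReal D ^ (n + 1) * ∏ j, ENNReal.ofReal (s j + s (j + 1) + c)⁻¹
          ∂Measure.pi (fun _ : Fin (n + 1) => volume.restrict (Icc (0 : ℝ) t)) :=
        lintegral_mono_ae <| (ae_forall_mem_pi (ae_restrict_mem measurableSet_Icc)).mono
          fun s hs => ofReal_prod_mul_exp_div_le hc hs
    _ ≤ ENNReal.ofReal D ^ (n + 1) * (ENNReal.ofReal π ^ n * ENNReal.ofReal (log (1 + t / c))) := by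
        rw [lintegral_const_mul _ (by fun_prop)]
        gcongr
        exact lintegral_prod_cycle_inv_add_le hc ht.le n
    _ ≤ _ := by
        rw [← ENNReal.ofReal_pow (by positivity), ← ENNReal.ofReal_pow pi_pos.le,
          ← ENNReal.ofReal_mul (by positivity), ← ENNReal.ofReal_mul (by positivity),
          ← mul_assoc]
        gcongr

/-- v-cycle integral bound: with the cyclic convention `s_{k+1} = s₁`,
`∫_{[0,t]^k} ∏_{j=1}^k λ_ε² e^{m(s_j+s_{j+1})}/(2π(s_j+s_{j+1}+2ε²)) ds
  ≤ (λ_ε e^{m̄t})^{2k}/(2^k π) · log(1 + t/ε²)`, for every `k = n+1 ≥ 1`. -/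
theorem vcycle_integral_bound (m ε t lam : ℝ)
    (hε : ε ∈ Ioo (0:ℝ) (1/2)) (ht : 0 < t) (hlam : 0 < lam) (n : ℕ) :
    (∫ s in (Set.univ.pi fun _ : Fin (n+1) => Icc (0:ℝ) t),
        ∏ j : Fin (n+1),
          lam^2 * Real.exp (m * (s j + s (j+1))) /
            (2 * Real.pi * (s j + s (j+1) + 2*ε^2))) ≤
      (lam * Real.exp (max m 0 * t)) ^ (2*(n+1)) / (2^(n+1) * Real.pi) *
        Real.log (1 + t/ε^2) :=
  vcycle_integral_bound_general m ε t lam hε ht n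
end

section
/- For every real m, t > 0, and ε ∈ (0,1/2), one has | (1/(2 log(1/ε))) ∫₀^t e^{2ms}/(s+ε²) ds − 1 | ≤ (e^{2|m| t} + |log(t+ε²)|) / (2 log(1/ε)). In particular, for every fixed t > 0, (1/(2 log(1/ε))) ∫₀^t e^{2ms}/(s+ε²) ds → 1 as ε → 0. -/
/-!
Split `e^{cs}/(s+a) = (e^{cs}-1)/(s+a) + 1/(s+a)`. The second part integrates exactly to
`log (t+a) - log a`, and with `a = ε²` the term `-log a = 2 log(1/ε)` is what normalises to `1`.
The first part is bounded by `∫₀^t |c| e^{|c|s} ds ≤ e^{|c|t}`, using `|e^x - 1| ≤ |x| e^{|x|}` and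
`s ≤ s + a`. The limit follows since `2 log(1/ε) → ∞` while the numerator of the bound stays
bounded as `ε → 0`.
-/

open Set Real Filter Topology intervalIntegral

lemma abs_exp_sub_one_le_abs_mul_exp_abs (x : ℝ) : |exp x - 1| ≤ |x| * exp |x| := by
  have h₁ : x + 1 ≤ exp x := add_one_le_exp x
  have h₂ : (1 - |x|) * exp |x| ≤ 1 := by
    have := mul_le_mul_of_nonneg_right (by linarith [add_one_le_exp (-|x|)] :
      1 - |x| ≤ exp (-|x|)) (exp_pos |x|).le
    rwa [← exp_add, neg_add_cancel, exp_zero] at this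
  have h₃ : exp x ≤ exp |x| := exp_le_exp.mpr (le_abs_self x)
  have h₄ : 1 ≤ exp |x| := one_le_exp (abs_nonneg x)
  rw [abs_le]
  constructor <;> nlinarith [neg_abs_le x, abs_nonneg x]

lemma abs_exp_mul_sub_one_div_add_le {c s a : ℝ} (hs : 0 ≤ s) (ha : 0 < a) :
    |(exp (c * s) - 1) / (s + a)| ≤ |c| * exp (|c| * s) := by
  have hsa : 0 < s + a := by linarith
  have hcs : |c * s| = |c| * s := by rw [abs_mul, abs_of_nonneg hs]
  rw [abs_div, abs_of_pos hsa, div_le_iff₀ hsa]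
  calc |exp (c * s) - 1| ≤ |c| * s * exp (|c| * s) := by
        simpa [hcs] using abs_exp_sub_one_le_abs_mul_exp_abs (c * s)
    _ ≤ |c| * exp (|c| * s) * (s + a) := by
        nlinarith [mul_nonneg (abs_nonneg c) (exp_pos (|c| * s)).le]

lemma intervalIntegrable_div_add_const {f : ℝ → ℝ} (hf : Continuous f) {t a : ℝ} (ht : 0 ≤ t)
    (ha : 0 < a) : IntervalIntegrable (fun s => f s / (s + a)) MeasureTheory.volume 0 t := by
  refine ContinuousOn.intervalIntegrable <| hf.continuousOn.div (by fun_prop) fun s hs => ?_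
  rw [uIcc_of_le ht] at hs
  linarith [hs.1]

lemma abs_integral_exp_mul_sub_one_div_add_le {c t a : ℝ} (ht : 0 ≤ t) (ha : 0 < a) :
    |∫ s in (0:ℝ)..t, (exp (c * s) - 1) / (s + a)| ≤ exp (|c| * t) - 1 := by
  have hint := intervalIntegrable_div_add_const (f := fun s => exp (c * s) - 1)
    (by fun_prop) ht ha
  calc |∫ s in (0:ℝ)..t, (exp (c * s) - 1) / (s + a)|
      ≤ ∫ s in (0:ℝ)..t, |c| * exp (|c| * s) := by
        refine (abs_integral_le_integral_abs ht).trans <| integral_mono_on ht hint.abs ?_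
          fun s hs => abs_exp_mul_sub_one_div_add_le hs.1 ha
        exact (by fun_prop : Continuous fun s => |c| * exp (|c| * s)).intervalIntegrable 0 t
    _ = exp (|c| * t) - 1 := by simp

lemma integral_one_div_add_const {t a : ℝ} (ht : 0 ≤ t) (ha : 0 < a) :
    ∫ s in (0:ℝ)..t, 1 / (s + a) = log (t + a) - log a := by
  rw [integral_comp_add_right (fun x => 1 / x), zero_add,
    integral_one_div_of_pos ha (by linarith), log_div (by linarith) ha.ne']

lemma tendsto_log_one_div_nhdsGT_zero : Tendsto (fun ε : ℝ => log (1 / ε)) (𝓝[>] 0) atTop := by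
  simpa [one_div, log_inv] using tendsto_log_nhdsGT_zero

lemma abs_one_div_neg_log_mul_integral_exp_mul_div_add_sub_one_le {c t a : ℝ} (ht : 0 ≤ t)
    (ha : 0 < a) (ha₁ : a < 1) :
    |1 / -log a * (∫ s in (0:ℝ)..t, exp (c * s) / (s + a)) - 1| ≤
      (exp (|c| * t) + |log (t + a)|) / -log a := by
  have hL : 0 < -log a := neg_pos.mpr (log_neg ha ha₁)
  have hsplit : ∫ s in (0:ℝ)..t, exp (c * s) / (s + a) =
      (∫ s in (0:ℝ)..t, (exp (c * s) - 1) / (s + a)) + (log (t + a) - log a) := by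
    rw [← integral_one_div_add_const ht ha, ← integral_add]
    · refine integral_congr fun s _ => ?_
      ring
    · exact intervalIntegrable_div_add_const (f := fun s => exp (c * s) - 1) (by fun_prop) ht ha
    · exact intervalIntegrable_div_add_const (f := fun _ => 1) continuous_const ht ha
  rw [hsplit, one_div_mul_eq_div, div_sub_one hL.ne', abs_div, abs_of_pos hL]
  gcongr
  calc _ = |(∫ s in (0:ℝ)..t, (exp (c * s) - 1) / (s + a)) + log (t + a)| := by
        congr 1
        ring
    _ ≤ _ := abs_add_le _ _
    _ ≤ _ := by linarith [abs_integral_exp_mul_sub_one_div_add_le (c := c) ht ha]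

/-- Quantitative estimate on the exponential integral
`(1/(2 log(1/ε))) ∫₀^t e^{2ms}/(s+ε²) ds`, and its limit `1` as `ε → 0`. -/
theorem exp_integral_estimate_and_limit (m : ℝ) :
    (∀ t ε : ℝ, 0 < t → ε ∈ Ioo (0:ℝ) (1/2) →
      abs ((1 / (2 * Real.log (1/ε))) * (∫ s in (0:ℝ)..t, Real.exp (2*m*s) / (s + ε^2)) - 1) ≤
        (Real.exp (2 * abs m * t) + abs (Real.log (t + ε^2))) / (2 * Real.log (1/ε))) ∧
    (∀ t : ℝ, 0 < t →
      Tendsto (fun ε : ℝ =>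
          (1 / (2 * Real.log (1/ε))) * ∫ s in (0:ℝ)..t, Real.exp (2*m*s) / (s + ε^2))
        (nhdsWithin 0 (Ioo (0:ℝ) (1/2))) (nhds 1)) := by
  have estimate : ∀ t ε : ℝ, 0 < t → ε ∈ Ioo (0:ℝ) (1/2) →
      |(1 / (2 * log (1/ε))) * (∫ s in (0:ℝ)..t, exp (2*m*s) / (s + ε^2)) - 1| ≤
        (exp (2 * |m| * t) + |log (t + ε^2)|) / (2 * log (1/ε)) := by
    rintro t ε ht ⟨hε₀, hε₁⟩
    have hlog : -log (ε ^ 2) = 2 * log (1 / ε) := by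
      rw [log_pow, one_div, log_inv]
      push_cast
      ring
    have := abs_one_div_neg_log_mul_integral_exp_mul_div_add_sub_one_le (c := 2 * m) ht.le
      (pow_pos hε₀ 2) (by nlinarith)
    rwa [hlog, abs_mul, abs_two] at this
  refine ⟨estimate, fun t ht => ?_⟩
  have hwithin : 𝓝[Ioo (0:ℝ) (1/2)] 0 ≤ 𝓝[>] 0 := nhdsWithin_mono 0 Ioo_subset_Ioi_self
  have hden : Tendsto (fun ε : ℝ => 2 * log (1/ε)) (𝓝[Ioo (0:ℝ) (1/2)] 0) atTop :=
    (tendsto_log_one_div_nhdsGT_zero.mono_left hwithin).const_mul_atTop two_pos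
  have hnum : Tendsto (fun ε : ℝ => exp (2 * |m| * t) + |log (t + ε^2)|)
      (𝓝[Ioo (0:ℝ) (1/2)] 0) (𝓝 (exp (2 * |m| * t) + |log (t + 0^2)|)) := by
    refine (ContinuousAt.tendsto ?_).mono_left nhdsWithin_le_nhds
    fun_prop (disch := simp [ht.ne'])
  rw [← tendsto_sub_nhds_zero_iff]
  exact squeeze_zero_norm' (eventually_nhdsWithin_of_forall fun ε hε => estimate t ε ht hε)
    (hnum.div_atTop hden)
end

section
/- Let τ = [τ₁ ⋯ τ_n] be a finite rooted tree with inner-vertex set I (excluding the root 𝔬), and for t > 0 let D_τ(t) = { s ∈ [0,t]^I : s_v ≥ s_u whenever v is the parent of u }, with the root-variable convention s_𝔬 = t. Then for every symmetric function Ψ: R^I → R (integrable on [0,t]^I): ∫_{D_τ(t)} Ψ(s) ds = (1/(T(τ₁)! ⋯ T(τ_n)!)) ∫_{[0,t]^I} Ψ(s) ds, where T(τ_i) is the tree obtained from τ_i by removing its leaves, and ! is the tree factorial. -/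
/-!
Almost every `s : V → ℝ` is injective, and an injective `s` lies in exactly one chamber
`{s | Monotone (s ∘ L)}`, `L : Fin n ≃ V`. Permuting coordinates permutes the chambers and
preserves the cube `[0,t]^V`, so for symmetric `Ψ` all chambers carry the same integral `c` over
the cube, which is therefore `n! * c`. Up to a null set the tree simplex is the union of the
chambers of the linear extensions of the forest order, so its integral is `e * c`, with `e` the
number of linear extensions. The hook length formula for forests,
`e * ∏ v, #(descendants of v) = n!`, finishes the proof. It follows by induction on `n`: the last
vertex of a linear extension is a root `m`, removing `m` leaves the other descendant sets
unchanged, and the descendant sets of the roots partition `V`.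
-/

open MeasureTheory Set Relation
open scoped Nat

/- A forest on `V` is encoded by `r u w : w is the parent of u`; the roots are the `m` with
`∀ w, ¬ r m w`, and `ReflTransGen r u v` says that `u` is a descendant of `v`. -/

section LinearExtension

variable {V : Type*} {r : V → V → Prop}

def IsLinearExtension {n : ℕ} (r : V → V → Prop) (L : Fin n ≃ V) : Prop :=
  ∀ i j, ReflTransGen r (L i) (L j) → i ≤ j

theorem eq_of_reflTransGen_of_forall_not {m v : V} (hm : ∀ w, ¬ r m w)
    (h : ReflTransGen r m v) : v = m :=
  (h.cases_head.resolve_right fun ⟨w, hmw, _⟩ => hm w hmw).symm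

theorem exists_root_of_acyclic [Finite V] (hacyc : ∀ v, ¬ TransGen r v v) (v : V) :
    ∃ m, ReflTransGen r v m ∧ ∀ w, ¬ r m w := by
  have : Std.Irrefl (TransGen (flip r)) := ⟨fun a h => hacyc a (transGen_swap.mp h)⟩
  obtain ⟨m, hvm, hmin⟩ := (Finite.wellFounded_of_trans_of_irrefl (TransGen (flip r))).has_min
    {w | ReflTransGen r v w} ⟨v, .refl⟩
  exact ⟨m, hvm, fun w hmw => hmin w (hvm.tail hmw) (.single hmw)⟩

theorem sum_ncard_reflTransGen_roots [Fintype V] [DecidablePred fun m : V => ∀ w, ¬ r m w]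
    (hr : Relator.RightUnique r) (hacyc : ∀ v, ¬ TransGen r v v) :
    ∑ m ∈ Finset.univ.filter (fun m : V => ∀ w, ¬ r m w), {u | ReflTransGen r u m}.ncard =
      Fintype.card V := by
  classical
  have hroot (u : V) : ∃! m, (∀ w, ¬ r m w) ∧ ReflTransGen r u m := by
    obtain ⟨m, hum, hm⟩ := exists_root_of_acyclic hacyc u
    refine ⟨m, ⟨hm, hum⟩, fun m' ⟨hm', hum'⟩ => ?_⟩
    rcases hum.total_of_right_unique hr hum' with h | h
    · exact eq_of_reflTransGen_of_forall_not hm h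
    · exact (eq_of_reflTransGen_of_forall_not hm' h).symm
  have hdouble := Finset.sum_card_bipartiteAbove_eq_sum_card_bipartiteBelow
    (fun m u => ReflTransGen r u m) (s := Finset.univ.filter fun m : V => ∀ w, ¬ r m w)
    (t := Finset.univ)
  simp only [Finset.bipartiteAbove, Finset.bipartiteBelow, Finset.filter_filter] at hdouble
  rw [← Finset.card_univ, Finset.card_eq_sum_ones Finset.univ]
  convert hdouble using 2 with m _ u
  · rw [ncard_eq_toFinset_card', toFinset_ofPred]
  · exact ((Fintype.existsUnique_iff_card_one _).mp (hroot u)).symm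

theorem IsLinearExtension.forall_not_rel_last (hacyc : ∀ v, ¬ TransGen r v v) {k : ℕ}
    {L : Fin (k + 1) ≃ V} (hL : IsLinearExtension r L) : ∀ w, ¬ r (L (Fin.last k)) w := by
  intro w hw
  have hle := hL (Fin.last k) (L.symm w) (by simpa using ReflTransGen.single hw)
  have hw' : L (Fin.last k) = w :=
    (L.symm_apply_eq.mp (le_antisymm (Fin.le_last _) hle)).symm
  exact hacyc w (.single (hw' ▸ hw))

section Restrict

variable {m : V}

theorem reflTransGen_restrict_iff (hm : ∀ w, ¬ r m w) {u v : {v : V // v ≠ m}} :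
    ReflTransGen (fun a b : {v : V // v ≠ m} => r a b) u v ↔ ReflTransGen r u v := by
  refine ⟨fun h => h.lift Subtype.val fun _ _ => id, fun h => ?_⟩
  obtain ⟨u, hu⟩ := u
  dsimp only at h
  induction h using ReflTransGen.head_induction_on with
  | refl => rfl
  | head hab hbv ih =>
    have hb : _ ≠ m := fun hb => v.2 (eq_of_reflTransGen_of_forall_not hm (hb ▸ hbv))
    exact .head (b := ⟨_, hb⟩) hab (ih hb)

theorem ncard_reflTransGen_restrict (hm : ∀ w, ¬ r m w) (v : {v : V // v ≠ m}) :
    {u | ReflTransGen (fun a b : {v : V // v ≠ m} => r a b) u v}.ncard =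
      {u | ReflTransGen r u v}.ncard := by
  have himage : Subtype.val '' {u | ReflTransGen (fun a b : {v : V // v ≠ m} => r a b) u v} =
      {u | ReflTransGen r u v} := by
    ext u
    refine ⟨fun ⟨u', hu', hu⟩ => hu ▸ (reflTransGen_restrict_iff hm).mp hu', fun hu => ?_⟩
    have hum : u ≠ m := fun h => v.2 (eq_of_reflTransGen_of_forall_not hm (h ▸ hu))
    exact ⟨⟨u, hum⟩, (reflTransGen_restrict_iff hm).mpr hu, rfl⟩
  rw [← himage, ncard_image_of_injective _ Subtype.val_injective]

variable [DecidableEq V] {k : ℕ}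

def equivRestrictOfLastEq (m : V) :
    {L : Fin (k + 1) ≃ V // L (Fin.last k) = m} ≃ (Fin k ≃ {v : V // v ≠ m}) :=
  (Equiv.subtypeEquiv (Equiv.equivCongr finSuccEquivLast (Equiv.refl V)) fun L => by
    simp).trans (Equiv.optionSubtype m)

@[simp]
theorem coe_equivRestrictOfLastEq_apply (L : {L : Fin (k + 1) ≃ V // L (Fin.last k) = m})
    (i : Fin k) : (equivRestrictOfLastEq m L i : V) = L.1 i.castSucc := by
  simp [equivRestrictOfLastEq]

theorem isLinearExtension_iff_equivRestrictOfLastEq (hm : ∀ w, ¬ r m w)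
    (L : {L : Fin (k + 1) ≃ V // L (Fin.last k) = m}) :
    IsLinearExtension r L.1 ↔
      IsLinearExtension (fun a b : {v : V // v ≠ m} => r a b) (equivRestrictOfLastEq m L) := by
  obtain ⟨L, hL⟩ := L
  simp only [IsLinearExtension, reflTransGen_restrict_iff hm, coe_equivRestrictOfLastEq_apply]
  refine ⟨fun h i j hij => Fin.castSucc_le_castSucc_iff.mp (h _ _ hij), fun h i j hij => ?_⟩
  induction j using Fin.lastCases with
  | last => exact Fin.le_last i
  | cast j =>
    induction i using Fin.lastCases with
    | cast i => exact Fin.castSucc_le_castSucc_iff.mpr (h i j hij)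
    | last =>
      have hj : L j.castSucc = L (Fin.last k) :=
        hL ▸ eq_of_reflTransGen_of_forall_not hm (hL ▸ hij)
      exact absurd (L.injective hj) (Fin.castSucc_lt_last j).ne

theorem card_linearExtension_lastEq (hm : ∀ w, ¬ r m w) :
    Nat.card {L : Fin (k + 1) ≃ V // L (Fin.last k) = m ∧ IsLinearExtension r L} =
      Nat.card {L : Fin k ≃ {v : V // v ≠ m} //
        IsLinearExtension (fun a b : {v : V // v ≠ m} => r a b) L} :=
  Nat.card_congr <| (Equiv.subtypeSubtypeEquivSubtypeInter _ _).symm.trans <|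
    (equivRestrictOfLastEq m).subtypeEquiv (isLinearExtension_iff_equivRestrictOfLastEq hm)

end Restrict

theorem card_linearExtension_eq_sum_lastEq [Fintype V]
    [DecidablePred fun m : V => ∀ w, ¬ r m w] (hacyc : ∀ v, ¬ TransGen r v v) {k : ℕ} :
    Nat.card {L : Fin (k + 1) ≃ V // IsLinearExtension r L} =
      ∑ m ∈ Finset.univ.filter (fun m : V => ∀ w, ¬ r m w),
        Nat.card {L : Fin (k + 1) ≃ V // L (Fin.last k) = m ∧ IsLinearExtension r L} := by
  classical
  simp only [Nat.card_eq_fintype_card, Fintype.card_subtype]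
  rw [Finset.card_eq_sum_card_fiberwise (f := fun L => L (Fin.last k))
    (t := Finset.univ.filter fun m : V => ∀ w, ¬ r m w) fun L hL =>
      Finset.mem_filter.mpr
        ⟨Finset.mem_univ _, (Finset.mem_filter.mp hL).2.forall_not_rel_last hacyc⟩]
  simp only [Finset.filter_filter, and_comm]

theorem card_linearExtension_mul_prod_ncard [Fintype V] (hr : Relator.RightUnique r)
    (hacyc : ∀ v, ¬ TransGen r v v) {n : ℕ} (hV : Fintype.card V = n) :
    Nat.card {L : Fin n ≃ V // IsLinearExtension r L} * ∏ v, {u | ReflTransGen r u v}.ncard =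
      n ! := by
  classical
  induction n generalizing V with
  | zero =>
    have := Fintype.card_eq_zero_iff.mp hV
    simpa using Fintype.card_eq_one_iff.mpr
      ⟨⟨Equiv.equivOfIsEmpty _ _, fun i => i.elim0⟩, fun L => Subtype.ext (Subsingleton.elim _ _)⟩
  | succ k ih =>
    have hfibre (m : V) (hm : ∀ w, ¬ r m w) :
        Nat.card {L : Fin (k + 1) ≃ V // L (Fin.last k) = m ∧ IsLinearExtension r L} *
          ∏ v, {u | ReflTransGen r u v}.ncard = k ! * {u | ReflTransGen r u m}.ncard := by
      have ih' := ih (V := {v : V // v ≠ m}) (r := fun a b => r a b)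
        (fun _ _ _ hab hac => Subtype.ext (hr hab hac))
        (fun v h => hacyc v (h.lift Subtype.val fun _ _ => id)) (by simp [hV])
      rw [card_linearExtension_lastEq hm, Fintype.prod_eq_mul_prod_subtype_ne _ m, mul_left_comm,
        ← Finset.prod_congr rfl fun v _ => ncard_reflTransGen_restrict hm v, ih', mul_comm]
    rw [card_linearExtension_eq_sum_lastEq hacyc, Finset.sum_mul,
      Finset.sum_congr rfl fun m hm => hfibre m (Finset.mem_filter.mp hm).2, ← Finset.mul_sum,
      sum_ncard_reflTransGen_roots hr hacyc, hV, Nat.factorial_succ, mul_comm]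

end LinearExtension

section Chamber

variable {V : Type*}

def chamber {α : Type*} [Preorder α] {n : ℕ} (L : Fin n ≃ V) : Set (V → α) :=
  {s | Monotone (s ∘ L)}

theorem measurableSet_chamber {n : ℕ} (L : Fin n ≃ V) :
    MeasurableSet (chamber L : Set (V → ℝ)) := by
  have : (chamber L : Set (V → ℝ)) = ⋂ i, ⋂ j, ⋂ (_ : i ≤ j), {s | s (L i) ≤ s (L j)} := by
    ext s; simp [chamber, Monotone]
  rw [this]
  exact .iInter fun i => .iInter fun j => .iInter fun _ =>
    measurableSet_le (measurable_pi_apply _) (measurable_pi_apply _)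

theorem preimage_comp_chamber {α : Type*} [Preorder α] {n : ℕ} (σ : Equiv.Perm V)
    (L : Fin n ≃ V) : (fun s : V → α => s ∘ σ) ⁻¹' chamber L = chamber (L.trans σ) :=
  rfl

theorem preimage_comp_perm_pi {α : Type*} (σ : Equiv.Perm V) (A : Set α) :
    (fun s : V → α => s ∘ σ) ⁻¹' univ.pi (fun _ => A) = univ.pi (fun _ => A) := by
  ext s
  simp only [mem_preimage, mem_univ_pi, Function.comp_apply]
  exact ⟨fun h v => by simpa using h (σ.symm v), fun h v => h _⟩

variable [Fintype V]

theorem existsUnique_monotone_comp {α : Type*} [LinearOrder α] {s : V → α}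
    (hs : Function.Injective s) : ∃! L : Fin (Fintype.card V) ≃ V, Monotone (s ∘ L) := by
  set e := (Fintype.equivFin V).symm
  have hsort : Monotone (s ∘ (Tuple.sort (s ∘ e)).trans e) := Tuple.monotone_sort (s ∘ e)
  refine ⟨_, hsort, fun L hL => ?_⟩
  have hstrict {L : Fin (Fintype.card V) ≃ V} (hL : Monotone (s ∘ L)) : StrictMono (s ∘ L) :=
    hL.strictMono_of_injective (hs.comp L.injective)
  have hcomp : s ∘ L = s ∘ (Tuple.sort (s ∘ e)).trans e := by
    refine ((hstrict hL).range_inj (hstrict hsort)).mp ?_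
    rw [L.surjective.range_comp, Equiv.surjective _ |>.range_comp]
  exact Equiv.ext fun i => hs (congrFun hcomp i)

theorem volume_setOf_apply_eq_apply {u v : V} (huv : u ≠ v) :
    volume {s : V → ℝ | s u = s v} = 0 := by
  let H : Submodule ℝ (V → ℝ) :=
    LinearMap.ker ((LinearMap.proj u : (V → ℝ) →ₗ[ℝ] ℝ) - LinearMap.proj v)
  have hH : (H : Set (V → ℝ)) = {s | s u = s v} := by ext s; simp [H, sub_eq_zero]
  rw [← hH]
  refine Measure.addHaar_submodule _ H fun htop => ?_
  classical
  have : (Pi.single u 1 : V → ℝ) ∈ H := htop ▸ Submodule.mem_top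
  simp [H, huv.symm] at this

theorem ae_injective : ∀ᵐ s : V → ℝ, Function.Injective s := by
  refine ae_all_iff.mpr fun u => ae_all_iff.mpr fun v => ?_
  by_cases huv : u = v
  · exact .of_forall fun _ _ => huv
  · filter_upwards [measure_eq_zero_iff_ae_notMem.mp (volume_setOf_apply_eq_apply huv)] with s hs
    exact fun h => absurd h hs

theorem setIntegral_eq_sum_chamber [DecidableEq V] {S : Set (V → ℝ)} (hS : MeasurableSet S)
    {f : (V → ℝ) → ℝ} (hf : IntegrableOn f S) :
    ∫ s in S, f s = ∑ L : Fin (Fintype.card V) ≃ V, ∫ s in chamber L ∩ S, f s := by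
  have hsum : ∀ᵐ s, S.indicator f s =
      ∑ L : Fin (Fintype.card V) ≃ V, (chamber L ∩ S).indicator f s := by
    filter_upwards [ae_injective] with s hs
    obtain ⟨L₀, hL₀, huniq⟩ := existsUnique_monotone_comp hs
    rw [Finset.sum_eq_single L₀
      (fun L _ hL => indicator_of_notMem (fun h => hL (huniq L h.1)) _) (by simp)]
    by_cases hsS : s ∈ S
    · rw [indicator_of_mem hsS, indicator_of_mem (show s ∈ chamber L₀ ∩ S from ⟨hL₀, hsS⟩)]
    · rw [indicator_of_notMem hsS, indicator_of_notMem fun h => hsS h.2]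
  rw [← integral_indicator hS, integral_congr_ae hsum, integral_finsetSum _ fun L _ =>
    (integrable_indicator_iff ((measurableSet_chamber L).inter hS)).mpr
      (hf.mono_set inter_subset_right)]
  exact Finset.sum_congr rfl fun L _ => integral_indicator ((measurableSet_chamber L).inter hS)

variable {Ψ : (V → ℝ) → ℝ}

theorem setIntegral_preimage_comp_perm (hsymm : ∀ (σ : Equiv.Perm V) (s : V → ℝ), Ψ (s ∘ σ) = Ψ s)
    (σ : Equiv.Perm V) (S : Set (V → ℝ)) :
    ∫ s in (fun s => s ∘ σ) ⁻¹' S, Ψ s = ∫ s in S, Ψ s := by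
  have hφ : ⇑(MeasurableEquiv.piCongrLeft (fun _ : V => ℝ) σ).symm = fun s => s ∘ σ := by
    ext s v; exact Equiv.piCongrLeft_symm_apply _ _ _ _
  have := (volume_measurePreserving_piCongrLeft (fun _ : V => ℝ) σ).symm.setIntegral_preimage_emb
    (MeasurableEquiv.piCongrLeft (fun _ : V => ℝ) σ).symm.measurableEmbedding Ψ S
  rw [hφ] at this
  simpa only [hsymm] using this

theorem setIntegral_chamber_inter_pi (hsymm : ∀ (σ : Equiv.Perm V) (s : V → ℝ), Ψ (s ∘ σ) = Ψ s)
    (A : Set ℝ) {n : ℕ} (L L' : Fin n ≃ V) :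
    ∫ s in chamber L ∩ univ.pi (fun _ => A), Ψ s =
      ∫ s in chamber L' ∩ univ.pi (fun _ => A), Ψ s := by
  have hL' : L' = L.trans (L.symm.trans L') := by ext; simp
  rw [hL', ← preimage_comp_chamber, ← setIntegral_preimage_comp_perm hsymm (L.symm.trans L'),
    preimage_inter, preimage_comp_perm_pi]

end Chamber

section TreeSimplex

variable {V : Type*} {r : V → V → Prop}

def treeSimplex (r : V → V → Prop) (t : ℝ) : Set (V → ℝ) :=
  {s | (∀ v, s v ∈ Icc 0 t) ∧ ∀ u v, r u v → s u ≤ s v}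

theorem measurableSet_treeSimplex [Countable V] (r : V → V → Prop) (t : ℝ) :
    MeasurableSet (treeSimplex r t) := by
  simp only [treeSimplex, ofPred_and, ofPred_forall]
  exact (MeasurableSet.iInter fun v => measurable_pi_apply v measurableSet_Icc).inter <|
    .iInter fun u => .iInter fun v => .iInter fun _ =>
      measurableSet_le (measurable_pi_apply u) (measurable_pi_apply v)

theorem treeSimplex_subset_pi (t : ℝ) : treeSimplex r t ⊆ univ.pi fun _ => Icc 0 t :=
  fun _ hs => mem_univ_pi.mpr hs.1

theorem apply_le_apply_of_reflTransGen {α : Type*} [Preorder α] {s : V → α}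
    (hs : ∀ u v, r u v → s u ≤ s v) {u v : V} (h : ReflTransGen r u v) : s u ≤ s v := by
  induction h with
  | refl => exact le_rfl
  | tail _ hvw ih => exact ih.trans (hs _ _ hvw)

theorem isLinearExtension_of_mem_chamber {α : Type*} [LinearOrder α] {n : ℕ} {L : Fin n ≃ V}
    {s : V → α} (hs : Function.Injective s) (hsL : s ∈ chamber L)
    (hsr : ∀ u v, r u v → s u ≤ s v) : IsLinearExtension r L := fun _ _ hij =>
  (hsL.strictMono_of_injective (hs.comp L.injective)).le_iff_le.mp
    (apply_le_apply_of_reflTransGen hsr hij)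

theorem chamber_inter_treeSimplex_eq {n : ℕ} {L : Fin n ≃ V} (hL : IsLinearExtension r L)
    (t : ℝ) : chamber L ∩ treeSimplex r t = chamber L ∩ (univ.pi fun _ => Icc 0 t) := by
  refine (inter_subset_inter_right _ (treeSimplex_subset_pi t)).antisymm
    fun s ⟨hsL, hst⟩ => ⟨hsL, mem_univ_pi.mp hst, fun u v huv => ?_⟩
  simpa using hsL (hL (L.symm u) (L.symm v) (by simpa using ReflTransGen.single huv))

theorem setIntegral_chamber_inter_treeSimplex_of_not [Fintype V] (Ψ : (V → ℝ) → ℝ) (t : ℝ)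
    {n : ℕ} {L : Fin n ≃ V} (hL : ¬ IsLinearExtension r L) :
    ∫ s in chamber L ∩ treeSimplex r t, Ψ s = 0 :=
  setIntegral_measure_zero _ <| measure_mono_null (t := {s | ¬ Function.Injective s})
    (fun _ ⟨hsL, hsD⟩ hs => hL (isLinearExtension_of_mem_chamber hs hsL hsD.2))
    (ae_iff.mp ae_injective)

variable [Fintype V] {Ψ : (V → ℝ) → ℝ}

theorem setIntegral_treeSimplex (hsymm : ∀ (σ : Equiv.Perm V) (s : V → ℝ), Ψ (s ∘ σ) = Ψ s)
    {t : ℝ} (hint : IntegrableOn Ψ (univ.pi fun _ => Icc 0 t)) (L₀ : Fin (Fintype.card V) ≃ V) :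
    ∫ s in treeSimplex r t, Ψ s =
      Nat.card {L : Fin (Fintype.card V) ≃ V // IsLinearExtension r L} *
        ∫ s in chamber L₀ ∩ (univ.pi fun _ => Icc 0 t), Ψ s := by
  classical
  have hterm (L : Fin (Fintype.card V) ≃ V) : ∫ s in chamber L ∩ treeSimplex r t, Ψ s =
      if IsLinearExtension r L then ∫ s in chamber L₀ ∩ (univ.pi fun _ => Icc 0 t), Ψ s
      else 0 := by
    split_ifs with hL
    · rw [chamber_inter_treeSimplex_eq hL, setIntegral_chamber_inter_pi hsymm _ L L₀]
    · exact setIntegral_chamber_inter_treeSimplex_of_not Ψ t hL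
  rw [setIntegral_eq_sum_chamber (measurableSet_treeSimplex r t)
      (hint.mono_set (treeSimplex_subset_pi t)), Finset.sum_congr rfl fun L _ => hterm L,
    Finset.sum_ite, Finset.sum_const_zero, add_zero, Finset.sum_const, nsmul_eq_mul,
    Nat.card_eq_fintype_card, Fintype.card_subtype]

theorem setIntegral_pi (hsymm : ∀ (σ : Equiv.Perm V) (s : V → ℝ), Ψ (s ∘ σ) = Ψ s)
    {A : Set ℝ} (hA : MeasurableSet A) (hint : IntegrableOn Ψ (univ.pi fun _ => A))
    (L₀ : Fin (Fintype.card V) ≃ V) :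
    ∫ s in univ.pi (fun _ => A), Ψ s =
      (Fintype.card V)! * ∫ s in chamber L₀ ∩ (univ.pi fun _ => A), Ψ s := by
  classical
  rw [setIntegral_eq_sum_chamber (.univ_pi fun _ => hA) hint]
  simp only [setIntegral_chamber_inter_pi hsymm _ _ L₀, Finset.sum_const, Finset.card_univ,
    Fintype.card_equiv L₀, Fintype.card_fin, nsmul_eq_mul]

end TreeSimplex

/- `par v = none` means that the parent of `v` is the root `𝔬`, and `T(τ₁)! ⋯ T(τ_n)!` is the
product over `v ∈ V` of the number of descendants of `v` in `V`, `v` included. -/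
theorem tree_simplex_integral_of_symmetric_general
    {V : Type*} [Fintype V]
    (par : V → Option V)
    (hforest : ∀ v : V, ¬ Relation.TransGen (fun u w => par u = some w) v v)
    (t : ℝ)
    (Ψ : (V → ℝ) → ℝ)
    (hsymm : ∀ (σ : Equiv.Perm V) (s : V → ℝ), Ψ (s ∘ σ) = Ψ s)
    (hint : IntegrableOn Ψ (Set.univ.pi fun _ : V => Icc (0:ℝ) t)) :
    (∫ s in {s : V → ℝ | (∀ v, s v ∈ Icc (0:ℝ) t) ∧
        ∀ u v, par u = some v → s u ≤ s v}, Ψ s) =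
      (1 / ∏ v : V,
          (Set.ncard {u : V | Relation.ReflTransGen (fun a b => par a = some b) u v} : ℝ)) *
        ∫ s in (Set.univ.pi fun _ : V => Icc (0:ℝ) t), Ψ s := by
  set L₀ := (Fintype.equivFin V).symm
  have hcount := card_linearExtension_mul_prod_ncard (r := fun a b => par a = some b)
    (fun _ _ _ hb hc => Option.some_injective _ (hb.symm.trans hc)) hforest rfl
  have hprod : (∏ v : V, ({u | ReflTransGen (fun a b => par a = some b) u v}.ncard : ℝ)) ≠ 0 :=
    Finset.prod_ne_zero_iff.mpr fun v _ =>
      Nat.cast_ne_zero.mpr ((ncard_pos (toFinite _)).mpr ⟨v, .refl⟩).ne'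
  rw [show {s : V → ℝ | _} = treeSimplex (fun a b => par a = some b) t from rfl,
    setIntegral_treeSimplex hsymm hint L₀, setIntegral_pi hsymm measurableSet_Icc hint L₀,
    ← hcount]
  push_cast
  field_simp

/-- Tree-simplex integral of a symmetric function: for every symmetric `Ψ`,
`∫_{D_τ(t)} Ψ = (1/(T(τ₁)!⋯T(τ_n)!)) ∫_{[0,t]^V} Ψ`. -/
theorem tree_simplex_integral_of_symmetric
    {V : Type*} [Fintype V] [DecidableEq V] [Nonempty V]
    (par : V → Option V)
    (hforest : ∀ v : V, ¬ Relation.TransGen (fun u w => par u = some w) v v)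
    (t : ℝ) (ht : 0 < t)
    (Ψ : (V → ℝ) → ℝ)
    (hsymm : ∀ (σ : Equiv.Perm V) (s : V → ℝ), Ψ (s ∘ σ) = Ψ s)
    (hint : IntegrableOn Ψ (Set.univ.pi fun _ : V => Icc (0:ℝ) t)) :
    (∫ s in {s : V → ℝ | (∀ v, s v ∈ Icc (0:ℝ) t) ∧
        ∀ u v, par u = some v → s u ≤ s v}, Ψ s) =
      (1 / ∏ v : V,
          (Set.ncard {u : V | Relation.ReflTransGen (fun a b => par a = some b) u v} : ℝ)) *
        ∫ s in (Set.univ.pi fun _ : V => Icc (0:ℝ) t), Ψ s :=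
  tree_simplex_integral_of_symmetric_general par hforest t Ψ hsymm hint
end
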